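/- arXiv:1105.1204 — 3 statements merged into one kernel-verified Lean document; each statement's English description precedes it below -/
import Mathlib

section
/- Let n ≥ 2 and let φ : ℝⁿ ∖ {0} → ℝ be a C¹ function homogeneous of degree 0. Let ω ∈ ℝⁿ with |ω| = 1 and x₀ ∈ ℝⁿ with x₀ ≠ 0 and x₀·ω = 0. Then the function s ↦ ∇φ(x₀ + sω)·ω is integrable on ℝ and ∫_{−∞}^{∞} ∇φ(x₀ + sω)·ω ds = φ(ω) − φ(−ω). -/
/-! Along the line `s ↦ x₀ + s • ω` the integrand is the derivative of `s ↦ φ (x₀ + s • ω)`,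
which by homogeneity equals `φ (s⁻¹ • x₀ + ω)` for `s > 0` and so tends to `φ (±ω)` as `s → ±∞`.
For integrability, homogeneity and compactness of the unit sphere give `‖Dφ y‖ ≤ M / ‖y‖`, and
Euler's relation `Dφ y y = 0` upgrades this to an `O(1 / (‖x₀‖² + s²))` bound on the integrand. -/

open Real MeasureTheory RealInnerProductSpace Set Filter Topology

theorem integrable_inv_sq_add_sq {a : ℝ} (ha : a ≠ 0) :
    Integrable fun s : ℝ => (a ^ 2 + s ^ 2)⁻¹ := by
  refine ((integrable_inv_one_add_sq.comp_div ha).const_mul (a ^ 2)⁻¹).congr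
    (ae_of_all _ fun s => ?_)
  field_simp

def IsZeroHomogeneous {E F : Type*} [AddCommGroup E] [Module ℝ E] (φ : E → F) : Prop :=
  ∀ t : ℝ, 0 < t → ∀ x : E, x ≠ 0 → φ (t • x) = φ x

namespace IsZeroHomogeneous

section Limits

variable {E F : Type*} [NormedAddCommGroup E] [NormedSpace ℝ E] [TopologicalSpace F] {φ : E → F}

theorem tendsto_line_atTop (h : IsZeroHomogeneous φ) {ω : E} (hω : ω ≠ 0)
    (hc : ContinuousAt φ ω) (x₀ : E) :
    Tendsto (fun s : ℝ => φ (x₀ + s • ω)) atTop (𝓝 (φ ω)) := by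
  have hlim : Tendsto (fun s : ℝ => s⁻¹ • x₀ + ω) atTop (𝓝 ω) := by
    simpa using ((tendsto_inv_atTop_zero (𝕜 := ℝ)).smul_const x₀).add_const ω
  refine (hc.tendsto.comp hlim).congr' ?_
  filter_upwards [eventually_gt_atTop 0, hlim.eventually_ne hω] with s hs hne
  rw [Function.comp_apply, ← h s hs _ hne, smul_add, smul_inv_smul₀ hs.ne']

theorem tendsto_line_atBot (h : IsZeroHomogeneous φ) {ω : E} (hω : ω ≠ 0)
    (hc : ContinuousAt φ (-ω)) (x₀ : E) :
    Tendsto (fun s : ℝ => φ (x₀ + s • ω)) atBot (𝓝 (φ (-ω))) := by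
  refine ((h.tendsto_line_atTop (neg_ne_zero.mpr hω) hc x₀).comp tendsto_neg_atBot_atTop).congr
    fun s => ?_
  simp

end Limits

section Derivatives

variable {E F : Type*} [NormedAddCommGroup E] [NormedSpace ℝ E] [NormedAddCommGroup F]
  [NormedSpace ℝ F] {φ : E → F}

theorem fderiv_eq_smul_fderiv_smul (h : IsZeroHomogeneous φ) {y : E} (hy : y ≠ 0) {t : ℝ}
    (ht : 0 < t) (hd : DifferentiableAt ℝ φ (t • y)) :
    fderiv ℝ φ y = t • fderiv ℝ φ (t • y) := by
  have hcomp : HasFDerivAt (fun x => φ (t • x)) ((fderiv ℝ φ (t • y)).comp (t • .id ℝ E)) y :=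
    hd.hasFDerivAt.comp y ((hasFDerivAt_id y).const_smul t)
  have heq : (fun x => φ (t • x)) =ᶠ[𝓝 y] φ := by
    filter_upwards [isOpen_compl_singleton.mem_nhds hy] with x hx
    exact h t ht x hx
  rw [(hcomp.congr_of_eventuallyEq heq.symm).fderiv]
  ext v
  simp

theorem fderiv_apply_self (h : IsZeroHomogeneous φ) {y : E} (hy : y ≠ 0)
    (hd : DifferentiableAt ℝ φ y) : fderiv ℝ φ y y = 0 := by
  have hray : HasDerivAt (fun t : ℝ => φ (t • y)) (fderiv ℝ φ y y) 1 := by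
    rw [← one_smul ℝ y] at hd
    simpa [Function.comp_def] using
      hd.hasFDerivAt.comp_hasDerivAt (1 : ℝ) ((hasDerivAt_id (1 : ℝ)).smul_const y)
  have hconst : (fun t : ℝ => φ (t • y)) =ᶠ[𝓝 1] fun _ => φ y := by
    filter_upwards [eventually_gt_nhds one_pos] with t ht
    exact h t ht y hy
  exact (hray.congr_of_eventuallyEq hconst.symm).unique (hasDerivAt_const 1 (φ y))

theorem exists_norm_fderiv_le [FiniteDimensional ℝ E] (h : IsZeroHomogeneous φ)
    (hφ : ContDiffOn ℝ 1 φ {0}ᶜ) : ∃ M, ∀ y : E, y ≠ 0 → ‖fderiv ℝ φ y‖ ≤ M / ‖y‖ := by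
  obtain ⟨M, hM⟩ : ∃ M, ∀ u ∈ Metric.sphere (0 : E) 1, ‖fderiv ℝ φ u‖ ≤ M := by
    refine (isCompact_sphere 0 1).exists_bound_of_continuousOn
      ((hφ.continuousOn_fderiv_of_isOpen isOpen_compl_singleton le_rfl).mono ?_)
    rintro u hu rfl
    simp at hu
  refine ⟨M, fun y hy => ?_⟩
  have hny : 0 < ‖y‖ := norm_pos_iff.mpr hy
  have hu : ‖y‖⁻¹ • y ∈ Metric.sphere (0 : E) 1 := by simp [norm_smul, hny.ne']
  have hd : DifferentiableAt ℝ φ (‖y‖⁻¹ • y) := (hφ.differentiableOn one_ne_zero).differentiableAt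
    (isOpen_compl_singleton.mem_nhds (smul_ne_zero (inv_ne_zero hny.ne') hy))
  rw [h.fderiv_eq_smul_fderiv_smul hy (inv_pos.mpr hny) hd, norm_smul, norm_inv, norm_norm,
    inv_mul_eq_div]
  gcongr
  exact hM _ hu

end Derivatives

end IsZeroHomogeneous

section Line

variable {E F : Type*} [NormedAddCommGroup E] [InnerProductSpace ℝ E] [NormedAddCommGroup F]
  [NormedSpace ℝ F] {x₀ ω : E}

theorem norm_add_smul_sq_of_inner_eq_zero (hperp : ⟪x₀, ω⟫ = 0) (hω : ‖ω‖ = 1) (s : ℝ) :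
    ‖x₀ + s • ω‖ ^ 2 = ‖x₀‖ ^ 2 + s ^ 2 := by
  rw [sq, sq, norm_add_sq_eq_norm_sq_add_norm_sq_real
    (by rw [real_inner_smul_right, hperp, mul_zero]), norm_smul, hω]
  simp [sq]

theorem add_smul_ne_zero_of_inner_eq_zero (hperp : ⟪x₀, ω⟫ = 0) (hω : ‖ω‖ = 1) (hx₀ : x₀ ≠ 0)
    (s : ℝ) : x₀ + s • ω ≠ 0 := by
  intro h
  have hsq := norm_add_smul_sq_of_inner_eq_zero hperp hω s
  rw [h, norm_zero] at hsq
  have : 0 < ‖x₀‖ := norm_pos_iff.mpr hx₀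
  nlinarith

/-- Apply `D` to `‖x₀‖² • ω - s • x₀ = (‖x₀‖² + s²) • ω - s • (x₀ + s • ω)`, a vector of norm
`‖x₀‖ * ‖x₀ + s • ω‖`. -/
theorem norm_apply_mul_le_of_apply_add_smul_eq_zero (D : E →L[ℝ] F) (hperp : ⟪x₀, ω⟫ = 0)
    (hω : ‖ω‖ = 1) {s : ℝ} (hD : D (x₀ + s • ω) = 0) :
    ‖D ω‖ * (‖x₀‖ ^ 2 + s ^ 2) ≤ ‖D‖ * (‖x₀‖ * ‖x₀ + s • ω‖) := by
  set v := ‖x₀‖ ^ 2 • ω - s • x₀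
  have hDv : D v = (‖x₀‖ ^ 2 + s ^ 2) • D ω := by
    have hv : v = (‖x₀‖ ^ 2 + s ^ 2) • ω - s • (x₀ + s • ω) := by module
    rw [hv, map_sub, map_smul, map_smul, hD, smul_zero, sub_zero]
  have hv : ‖v‖ = ‖x₀‖ * ‖x₀ + s • ω‖ := by
    refine (sq_eq_sq₀ (norm_nonneg _) (by positivity)).mp ?_
    rw [mul_pow, norm_add_smul_sq_of_inner_eq_zero hperp hω, norm_sub_sq_real, norm_smul,
      norm_smul, real_inner_smul_left, real_inner_smul_right, real_inner_comm, hperp, hω]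
    simp only [Real.norm_eq_abs, abs_pow, abs_norm, mul_pow, sq_abs]
    ring
  calc ‖D ω‖ * (‖x₀‖ ^ 2 + s ^ 2) = ‖D v‖ := by
        rw [hDv, norm_smul, Real.norm_of_nonneg (by positivity), mul_comm]
    _ ≤ ‖D‖ * ‖v‖ := D.le_opNorm v
    _ = ‖D‖ * (‖x₀‖ * ‖x₀ + s • ω‖) := by rw [hv]

theorem IsZeroHomogeneous.integrable_fderiv_apply_line [FiniteDimensional ℝ E] {φ : E → F}
    (h : IsZeroHomogeneous φ) (hφ : ContDiffOn ℝ 1 φ {0}ᶜ) (hperp : ⟪x₀, ω⟫ = 0) (hω : ‖ω‖ = 1)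
    (hx₀ : x₀ ≠ 0) : Integrable fun s : ℝ => fderiv ℝ φ (x₀ + s • ω) ω := by
  have hline := add_smul_ne_zero_of_inner_eq_zero hperp hω hx₀
  obtain ⟨M, hM⟩ := h.exists_norm_fderiv_le hφ
  have hcont : Continuous fun s : ℝ => fderiv ℝ φ (x₀ + s • ω) := by
    rw [← continuousOn_univ]
    exact (hφ.continuousOn_fderiv_of_isOpen isOpen_compl_singleton le_rfl).comp
      (by fun_prop) fun s _ => hline s
  have hbound (s : ℝ) : ‖fderiv ℝ φ (x₀ + s • ω) ω‖ ≤ M * ‖x₀‖ * (‖x₀‖ ^ 2 + s ^ 2)⁻¹ := by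
    have hc : 0 < ‖x₀ + s • ω‖ := norm_pos_iff.mpr (hline s)
    have heuler := h.fderiv_apply_self (hline s)
      ((hφ.differentiableOn one_ne_zero).differentiableAt (isOpen_compl_singleton.mem_nhds (hline s)))
    rw [← div_eq_mul_inv, le_div_iff₀ (by positivity)]
    calc _ ≤ ‖fderiv ℝ φ (x₀ + s • ω)‖ * (‖x₀‖ * ‖x₀ + s • ω‖) :=
          norm_apply_mul_le_of_apply_add_smul_eq_zero _ hperp hω heuler
      _ ≤ M / ‖x₀ + s • ω‖ * (‖x₀‖ * ‖x₀ + s • ω‖) := by gcongr; exact hM _ (hline s)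
      _ = M * ‖x₀‖ := by field_simp
  exact ((integrable_inv_sq_add_sq (norm_ne_zero_iff.mpr hx₀)).const_mul (M * ‖x₀‖)).mono'
    (hcont.clm_apply continuous_const).aestronglyMeasurable (ae_of_all _ hbound)

end Line

theorem line_integral_of_gradient_of_homogeneous_general
    (n : ℕ)
    (φ : EuclideanSpace ℝ (Fin n) → ℝ)
    (hφ : ContDiffOn ℝ 1 φ {0}ᶜ)
    (hφhom : ∀ t : ℝ, 0 < t → ∀ x : EuclideanSpace ℝ (Fin n), x ≠ 0 → φ (t • x) = φ x)
    (ω x₀ : EuclideanSpace ℝ (Fin n)) (hω : ‖ω‖ = 1) (hx₀ : x₀ ≠ 0)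
    (hperp : ⟪x₀, ω⟫ = 0) :
    Integrable (fun s : ℝ => ⟪gradient φ (x₀ + s • ω), ω⟫) ∧
    (∫ s : ℝ, ⟪gradient φ (x₀ + s • ω), ω⟫) = φ ω - φ (-ω) := by
  have hhom : IsZeroHomogeneous φ := hφhom
  have hdiff {y} (hy : y ≠ 0) : DifferentiableAt ℝ φ y :=
    (hφ.differentiableOn one_ne_zero).differentiableAt (isOpen_compl_singleton.mem_nhds hy)
  have hω0 : ω ≠ 0 := norm_ne_zero_iff.mp (by rw [hω]; exact one_ne_zero)
  have hgrad : (fun s : ℝ => ⟪gradient φ (x₀ + s • ω), ω⟫) =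
      fun s => fderiv ℝ φ (x₀ + s • ω) ω := funext fun _ => InnerProductSpace.toDual_symm_apply
  have hint : Integrable fun s : ℝ => ⟪gradient φ (x₀ + s • ω), ω⟫ :=
    hgrad ▸ hhom.integrable_fderiv_apply_line hφ hperp hω hx₀
  have hderiv (s : ℝ) :
      HasDerivAt (fun s : ℝ => φ (x₀ + s • ω)) ⟪gradient φ (x₀ + s • ω), ω⟫ s := by
    rw [congrFun hgrad s]
    exact (hdiff (add_smul_ne_zero_of_inner_eq_zero hperp hω hx₀ s)).hasFDerivAt.comp_hasDerivAt s
      (by simpa using ((hasDerivAt_id s).smul_const ω).const_add x₀)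
  exact ⟨hint, integral_of_hasDerivAt_of_tendsto hderiv hint
    (hhom.tendsto_line_atBot hω0 (hdiff (neg_ne_zero.mpr hω0)).continuousAt x₀)
    (hhom.tendsto_line_atTop hω0 (hdiff hω0).continuousAt x₀)⟩

/-- For a `C¹` function `φ` on `ℝⁿ \ {0}` homogeneous of degree `0`, the line integral of
`∇φ ⬝ ω` along the line `x₀ + sω` (with `x₀ ≠ 0`, `x₀ ⬝ ω = 0`, `|ω| = 1`) converges and
equals `φ(ω) − φ(−ω)`. -/
theorem line_integral_of_gradient_of_homogeneous
    (n : ℕ) (hn : 2 ≤ n)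
    (φ : EuclideanSpace ℝ (Fin n) → ℝ)
    (hφ : ContDiffOn ℝ 1 φ {0}ᶜ)
    (hφhom : ∀ t : ℝ, 0 < t → ∀ x : EuclideanSpace ℝ (Fin n), x ≠ 0 → φ (t • x) = φ x)
    (ω x₀ : EuclideanSpace ℝ (Fin n)) (hω : ‖ω‖ = 1) (hx₀ : x₀ ≠ 0)
    (hperp : ⟪x₀, ω⟫ = 0) :
    Integrable (fun s : ℝ => ⟪gradient φ (x₀ + s • ω), ω⟫) ∧
    (∫ s : ℝ, ⟪gradient φ (x₀ + s • ω), ω⟫) = φ ω - φ (-ω) :=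
  line_integral_of_gradient_of_homogeneous_general n φ hφ hφhom ω x₀ hω hx₀ hperp
end

section
/- Let n ≥ 2, let φ : ℝⁿ ∖ {0} → ℝ be a C¹ function homogeneous of degree 0, and let m ∈ ℤ. Suppose that for every ω ∈ ℝⁿ with |ω| = 1 and every x₀ ∈ ℝⁿ with x₀ ≠ 0 and x₀·ω = 0 one has ∫_{−∞}^{∞} ∇φ(x₀ + sω)·ω ds = 2πm. Then m = 0, and φ(ω) = φ(−ω) for all unit vectors ω. -/
/-!
Parametrize the line `x₀ + sω` (with `x₀ ⊥ ω` unit vectors) by the angle `θ = arctan s`: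
by homogeneity `φ (x₀ + sω) = φ (cos θ • x₀ + sin θ • ω)`, a `C¹` function of `θ` on a great
circle. So the integrand, the derivative in `s`, is `O(1 / (1 + s²))`, and the line integral is
`φ ω - φ (-ω)`. Replacing `ω` by `-ω` flips its sign, whence `2πm = -2πm`.
-/

open Real MeasureTheory RealInnerProductSpace Filter Topology

theorem integrable_deriv_comp_arctan_mul {ψ : ℝ → ℝ} (hψ : ContDiff ℝ 1 ψ) :
    Integrable fun s : ℝ => deriv ψ (arctan s) * (1 / (1 + s ^ 2)) := by
  obtain ⟨M, hM⟩ := isCompact_Icc.exists_bound_of_continuousOn (s := Set.Icc (-(π / 2)) (π / 2))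
    (hψ.continuous_deriv le_rfl).continuousOn
  refine (integrable_inv_one_add_sq.const_mul M).mono'
    (((hψ.continuous_deriv le_rfl).comp continuous_arctan).mul
      (continuous_const.div (by fun_prop) fun s => by positivity)).aestronglyMeasurable
    (ae_of_all _ fun s => ?_)
  rw [norm_mul, one_div, norm_inv, Real.norm_of_nonneg (by positivity : (0 : ℝ) ≤ 1 + s ^ 2)]
  gcongr
  exact hM _ ⟨(neg_pi_div_two_lt_arctan s).le, (arctan_lt_pi_div_two s).le⟩

theorem integral_eq_sub_of_eq_comp_arctan {f f' ψ : ℝ → ℝ} (hψ : ContDiff ℝ 1 ψ)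
    (hf : ∀ s, f s = ψ (arctan s)) (hf' : ∀ s, HasDerivAt f (f' s) s) :
    ∫ s, f' s = ψ (π / 2) - ψ (-(π / 2)) := by
  obtain rfl : f = ψ ∘ arctan := funext hf
  have hf'_eq : f' = fun s => deriv ψ (arctan s) * (1 / (1 + s ^ 2)) := funext fun s =>
    (hf' s).unique (((hψ.differentiable one_ne_zero) _).hasDerivAt.comp s (hasDerivAt_arctan s))
  refine integral_of_hasDerivAt_of_tendsto hf' (hf'_eq ▸ integrable_deriv_comp_arctan_mul hψ)
    ?_ ?_
  · exact (hψ.continuous.tendsto _).comp (tendsto_arctan_atBot.mono_right nhdsWithin_le_nhds)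
  · exact (hψ.continuous.tendsto _).comp (tendsto_arctan_atTop.mono_right nhdsWithin_le_nhds)

section

variable {E : Type*} [NormedAddCommGroup E] [InnerProductSpace ℝ E]

theorem norm_cos_smul_add_sin_smul {x y : E} (hx : ‖x‖ = 1) (hy : ‖y‖ = 1) (hxy : ⟪x, y⟫ = 0)
    (θ : ℝ) : ‖cos θ • x + sin θ • y‖ = 1 := by
  have h := norm_add_sq_eq_norm_sq_add_norm_sq_real
    (by rw [real_inner_smul_left, real_inner_smul_right, hxy]; ring : ⟪cos θ • x, sin θ • y⟫ = 0)
  simp only [norm_smul, hx, hy, Real.norm_eq_abs, mul_one] at h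
  nlinarith [abs_mul_abs_self (cos θ), abs_mul_abs_self (sin θ), sin_sq_add_cos_sq θ,
    norm_nonneg (cos θ • x + sin θ • y)]

theorem add_smul_eq_sqrt_smul_cos_arctan (x y : E) (s : ℝ) :
    x + s • y = √(1 + s ^ 2) • (cos (arctan s) • x + sin (arctan s) • y) := by
  have : √(1 + s ^ 2) ≠ 0 := by positivity
  rw [cos_arctan, sin_arctan, smul_add, smul_smul, smul_smul, mul_one_div_cancel this,
    mul_div_cancel₀ _ this, one_smul]

theorem exists_norm_eq_one_inner_eq_zero [FiniteDimensional ℝ E] (hE : 2 ≤ Module.finrank ℝ E)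
    (v : E) : ∃ x : E, ‖x‖ = 1 ∧ ⟪x, v⟫ = 0 := by
  have hne : (ℝ ∙ v)ᗮ ≠ ⊥ := by
    intro hbot
    have h := Submodule.finrank_add_finrank_orthogonal (ℝ ∙ v)
    rw [hbot, finrank_bot] at h
    have := finrank_span_le_card (R := ℝ) ({v} : Set E)
    simp only [Set.toFinset_singleton, Finset.card_singleton] at this
    omega
  obtain ⟨x, hx, hx0⟩ := Submodule.exists_mem_ne_zero_of_ne_bot hne
  refine ⟨‖x‖⁻¹ • x, norm_smul_inv_norm hx0, ?_⟩
  rw [real_inner_smul_left, real_inner_comm, Submodule.inner_right_of_mem_orthogonal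
    (Submodule.mem_span_singleton_self v) hx, mul_zero]

variable [CompleteSpace E]

theorem hasDerivAt_comp_add_smul {φ : E → ℝ} {x v : E} {s : ℝ}
    (hφ : DifferentiableAt ℝ φ (x + s • v)) :
    HasDerivAt (fun t : ℝ => φ (x + t • v)) ⟪gradient φ (x + s • v), v⟫ s :=
  hφ.hasGradientAt.hasFDerivAt.comp_hasDerivAt (f := fun t : ℝ => x + t • v) s
    (by simpa using ((hasDerivAt_id s).smul_const v).const_add x)

theorem integral_inner_gradient_add_smul_eq_sub {φ : E → ℝ} (hφ : ContDiffOn ℝ 1 φ {0}ᶜ)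
    (hφhom : ∀ t : ℝ, 0 < t → ∀ x : E, x ≠ 0 → φ (t • x) = φ x)
    {x ω : E} (hx : ‖x‖ = 1) (hω : ‖ω‖ = 1) (hxω : ⟪x, ω⟫ = 0) :
    ∫ s : ℝ, ⟪gradient φ (x + s • ω), ω⟫ = φ ω - φ (-ω) := by
  set c : ℝ → E := fun θ => cos θ • x + sin θ • ω
  have hc : ∀ θ, c θ ≠ 0 := fun θ =>
    norm_ne_zero_iff.1 (by rw [norm_cos_smul_add_sin_smul hx hω hxω]; exact one_ne_zero)
  have hline : ∀ s : ℝ, x + s • ω ≠ 0 := fun s => by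
    rw [add_smul_eq_sqrt_smul_cos_arctan]; exact smul_ne_zero (by positivity) (hc _)
  have hψ : ContDiff ℝ 1 (φ ∘ c) := hφ.comp_contDiff (by fun_prop) hc
  have hderiv (s : ℝ) := hasDerivAt_comp_add_smul (φ := φ) (x := x) (v := ω) (s := s)
    ((hφ.differentiableOn one_ne_zero).differentiableAt
      (isOpen_compl_singleton.mem_nhds (hline s)))
  have h := integral_eq_sub_of_eq_comp_arctan hψ
    (fun s => by rw [add_smul_eq_sqrt_smul_cos_arctan, hφhom _ (by positivity) _ (hc _)]; rfl)
    hderiv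
  simpa [c] using h

end

/-- If all the line integrals of `∇φ ⬝ ω` (for `φ` a `C¹` function on `ℝⁿ \ {0}` homogeneous
of degree `0`) along lines `x₀ + sω` avoiding the origin equal `2πm` for a fixed integer `m`,
then `m = 0` and `φ(ω) = φ(−ω)` for all unit vectors `ω`. -/
theorem quantized_gradient_line_integrals
    (n : ℕ) (hn : 2 ≤ n)
    (φ : EuclideanSpace ℝ (Fin n) → ℝ)
    (hφ : ContDiffOn ℝ 1 φ {0}ᶜ)
    (hφhom : ∀ t : ℝ, 0 < t → ∀ x : EuclideanSpace ℝ (Fin n), x ≠ 0 → φ (t • x) = φ x)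
    (m : ℤ)
    (hint : ∀ ω x₀ : EuclideanSpace ℝ (Fin n), ‖ω‖ = 1 → x₀ ≠ 0 → ⟪x₀, ω⟫ = 0 →
      (∫ s : ℝ, ⟪gradient φ (x₀ + s • ω), ω⟫) = 2 * π * (m : ℝ)) :
    m = 0 ∧ ∀ ω : EuclideanSpace ℝ (Fin n), ‖ω‖ = 1 → φ ω = φ (-ω) := by
  have hE : 2 ≤ Module.finrank ℝ (EuclideanSpace ℝ (Fin n)) := by simpa using hn
  have line_integral : ∀ ω : EuclideanSpace ℝ (Fin n), ‖ω‖ = 1 → 2 * π * m = φ ω - φ (-ω) := by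
    intro ω hω
    obtain ⟨x, hx, hxω⟩ := exists_norm_eq_one_inner_eq_zero hE ω
    rw [← hint ω x hω (norm_ne_zero_iff.1 (by simp [hx])) hxω]
    exact integral_inner_gradient_add_smul_eq_sub hφ hφhom hx hω hxω
  obtain ⟨ω, hω, -⟩ := exists_norm_eq_one_inner_eq_zero hE 0
  have hm : m = 0 := by
    have h := line_integral (-ω) (by rwa [norm_neg])
    rw [neg_neg] at h
    have : π * m = 0 := by linarith [line_integral ω hω]
    exact_mod_cast (mul_eq_zero.1 this).resolve_left pi_ne_zero
  refine ⟨hm, fun ω hω => ?_⟩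
  have h := line_integral ω hω
  rw [hm, Int.cast_zero, mul_zero, eq_comm, sub_eq_zero] at h
  exact h
end

section
/- Let n ≥ 2, ε > 0, C > 0, R > 0, and let W : ℝⁿ → ℝⁿ be a continuous vector field with |W(x)| ≤ C(1 + |x|)^{−1−ε} for all x. For a unit vector ω and x₀ ∈ ℝⁿ with x₀·ω = 0 and |x₀| > R, set I(x₀, ω) = ∫_{−∞}^{∞} W(x₀ + sω)·ω ds. If exp(i I(x₀, ω)) = 1 for all such pairs (x₀, ω), then I(x₀, ω) = 0 for all such pairs. -/
open Real Complex MeasureTheory RealInnerProductSpace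

/-- If `W` is a continuous vector field on `ℝⁿ` (`n ≥ 2`) decaying like `(1+|x|)^{−1−ε}` and
all the line integrals `I(x₀, ω) = ∫ W(x₀+sω)⬝ω ds` over lines with `x₀ ⬝ ω = 0`, `|ω| = 1`,
`|x₀| > R` satisfy `e^{iI(x₀,ω)} = 1`, then all these line integrals vanish. -/
theorem line_integrals_vanish_of_exp_eq_one
    (n : ℕ) (hn : 2 ≤ n) (ε C R : ℝ) (hε : 0 < ε) (hC : 0 < C) (hR : 0 < R)
    (W : EuclideanSpace ℝ (Fin n) → EuclideanSpace ℝ (Fin n))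
    (hWcont : Continuous W)
    (hWdecay : ∀ x : EuclideanSpace ℝ (Fin n), ‖W x‖ ≤ C * (1 + ‖x‖) ^ (-(1 + ε)))
    (hexp : ∀ ω x₀ : EuclideanSpace ℝ (Fin n), ‖ω‖ = 1 → ⟪x₀, ω⟫ = 0 → R < ‖x₀‖ →
      Complex.exp (I * ((∫ s : ℝ, ⟪W (x₀ + s • ω), ω⟫) : ℝ)) = 1) :
    ∀ ω x₀ : EuclideanSpace ℝ (Fin n), ‖ω‖ = 1 → ⟪x₀, ω⟫ = 0 → R < ‖x₀‖ →
      (∫ s : ℝ, ⟪W (x₀ + s • ω), ω⟫) = 0 := by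
  intro ω x₀ hω hperp hRx
  have hx₀pos : 0 < ‖x₀‖ := lt_trans hR hRx
  -- the family of line integrals over scaled base points
  set f : ℝ → ℝ := fun t => ∫ s : ℝ, ⟪W (t • x₀ + s • ω), ω⟫ with hf
  -- norm computation on the line, using orthogonality
  have hnormsq : ∀ t s : ℝ, ‖t • x₀ + s • ω‖ ^ 2 = t ^ 2 * ‖x₀‖ ^ 2 + s ^ 2 := by
    intro t s
    rw [norm_add_sq_real, real_inner_smul_left, real_inner_smul_right, hperp, norm_smul,
      norm_smul, hω]
    simp [mul_pow, sq_abs]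
  have hnorm_ge_s : ∀ t s : ℝ, |s| ≤ ‖t • x₀ + s • ω‖ := by
    intro t s
    have h1 : |s| ^ 2 ≤ ‖t • x₀ + s • ω‖ ^ 2 := by
      rw [hnormsq, _root_.sq_abs]; nlinarith [sq_nonneg (t * ‖x₀‖)]
    exact (pow_le_pow_iff_left₀ (abs_nonneg s) (norm_nonneg _) two_ne_zero).mp h1
  have hnorm_ge_a : ∀ t s : ℝ, 0 ≤ t → t * ‖x₀‖ ≤ ‖t • x₀ + s • ω‖ := by
    intro t s ht
    have h1 : (t * ‖x₀‖) ^ 2 ≤ ‖t • x₀ + s • ω‖ ^ 2 := by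
      rw [hnormsq]; nlinarith [sq_nonneg s]
    exact (pow_le_pow_iff_left₀ (by positivity) (norm_nonneg _) two_ne_zero).mp h1
  -- pointwise bound on the integrand, uniform in t
  have hpt : ∀ t s : ℝ, |⟪W (t • x₀ + s • ω), ω⟫| ≤ C * (1 + |s|) ^ (-(1 + ε)) := by
    intro t s
    calc |⟪W (t • x₀ + s • ω), ω⟫| ≤ ‖W (t • x₀ + s • ω)‖ * ‖ω‖ :=
          abs_real_inner_le_norm _ _
    _ = ‖W (t • x₀ + s • ω)‖ := by rw [hω, mul_one]
    _ ≤ C * (1 + ‖t • x₀ + s • ω‖) ^ (-(1 + ε)) := hWdecay _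
    _ ≤ C * (1 + |s|) ^ (-(1 + ε)) := by
        refine mul_le_mul_of_nonneg_left ?_ hC.le
        exact Real.rpow_le_rpow_of_nonpos (by positivity)
          (by linarith [hnorm_ge_s t s]) (by linarith)
  -- integrable dominating function
  have hintbase : ∀ r : ℝ, 1 < r → Integrable (fun s : ℝ => (1 + |s|) ^ (-r)) := by
    intro r hr
    have h := integrable_one_add_norm (E := ℝ) (μ := volume) (r := r) (by simpa using hr)
    simpa [Real.norm_eq_abs] using h
  have hint1 : Integrable (fun s : ℝ => C * (1 + |s|) ^ (-(1 + ε))) :=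
    (hintbase (1 + ε) (by linarith)).const_mul C
  -- continuity of the integrand in each variable
  have hline : ∀ t : ℝ, Continuous fun s : ℝ => t • x₀ + s • ω :=
    fun t => continuous_const.add (continuous_id.smul continuous_const)
  have hFScont : ∀ t : ℝ, Continuous fun s : ℝ => ⟪W (t • x₀ + s • ω), ω⟫ :=
    fun t => Continuous.inner (hWcont.comp (hline t)) continuous_const
  have hFTcont : ∀ s : ℝ, Continuous fun t : ℝ => ⟪W (t • x₀ + s • ω), ω⟫ := by
    intro s
    exact Continuous.inner
      (hWcont.comp ((continuous_id.smul continuous_const).add continuous_const))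
      continuous_const
  have hFint : ∀ t : ℝ, Integrable (fun s : ℝ => ⟪W (t • x₀ + s • ω), ω⟫) := by
    intro t
    refine hint1.mono' (hFScont t).aestronglyMeasurable ?_
    exact Filter.Eventually.of_forall fun s => by
      simpa [Real.norm_eq_abs] using hpt t s
  -- continuity of f
  have hfcont : Continuous f := by
    rw [hf]
    refine continuous_of_dominated (fun t => (hFScont t).aestronglyMeasurable)
      (fun t => Filter.Eventually.of_forall fun s => ?_) hint1
      (Filter.Eventually.of_forall fun s => hFTcont s)
    simpa [Real.norm_eq_abs] using hpt t s
  -- values of f lie in 2πℤ for t ≥ 1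
  have hmem : ∀ t : ℝ, 1 ≤ t → ∃ k : ℤ, f t = 2 * π * k := by
    intro t ht
    have h1 : ⟪t • x₀, ω⟫ = 0 := by rw [real_inner_smul_left, hperp, mul_zero]
    have h2 : R < ‖t • x₀‖ := by
      rw [norm_smul, Real.norm_eq_abs, abs_of_pos (by linarith)]
      calc R < ‖x₀‖ := hRx
      _ ≤ t * ‖x₀‖ := le_mul_of_one_le_left (norm_nonneg _) ht
    have he := hexp ω (t • x₀) hω h1 h2
    rw [Complex.exp_eq_one_iff] at he
    obtain ⟨k, hk⟩ := he
    refine ⟨k, ?_⟩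
    have h3 : Complex.I * ((f t : ℝ) : ℂ) = Complex.I * ((2 * π * k : ℝ) : ℂ) := by
      have : (f t : ℂ) = ((∫ s : ℝ, ⟪W (t • x₀ + s • ω), ω⟫ : ℝ) : ℂ) := rfl
      rw [this, hk]; push_cast; ring
    have h4 := mul_left_cancel₀ Complex.I_ne_zero h3
    exact_mod_cast h4
  -- decay of f at infinity
  have hkey : ∀ t s : ℝ, 1 ≤ t →
      (1 + ‖t • x₀ + s • ω‖) ^ (-(1 + ε)) ≤
        (1 + t * ‖x₀‖) ^ (-(ε / 2)) * (1 + |s|) ^ (-(1 + ε / 2)) := by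
    intro t s ht
    set N := ‖t • x₀ + s • ω‖ with hN
    have hNs : |s| ≤ N := hnorm_ge_s t s
    have hNa : t * ‖x₀‖ ≤ N := hnorm_ge_a t s (by linarith)
    have hapos : (0:ℝ) < 1 + t * ‖x₀‖ := by positivity
    have hspos : (0:ℝ) < 1 + |s| := by positivity
    have hNpos : (0:ℝ) < 1 + N := by linarith
    have h1 : (1 + t * ‖x₀‖) ^ (ε / 2) ≤ (1 + N) ^ (ε / 2) :=
      Real.rpow_le_rpow hapos.le (by linarith) (by linarith)
    have h2 : (1 + |s|) ^ (1 + ε / 2) ≤ (1 + N) ^ (1 + ε / 2) :=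
      Real.rpow_le_rpow hspos.le (by linarith) (by linarith)
    have h3 : (1 + t * ‖x₀‖) ^ (ε / 2) * (1 + |s|) ^ (1 + ε / 2) ≤ (1 + N) ^ (1 + ε) := by
      have := mul_le_mul h1 h2 (Real.rpow_nonneg hspos.le _) (Real.rpow_nonneg hNpos.le _)
      rwa [← Real.rpow_add hNpos, show ε / 2 + (1 + ε / 2) = 1 + ε by ring] at this
    have h4 : ((1 + N) ^ (1 + ε))⁻¹ ≤
        ((1 + t * ‖x₀‖) ^ (ε / 2) * (1 + |s|) ^ (1 + ε / 2))⁻¹ :=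
      inv_anti₀ (by positivity) h3
    calc (1 + N) ^ (-(1 + ε)) = ((1 + N) ^ (1 + ε))⁻¹ := Real.rpow_neg hNpos.le _
    _ ≤ ((1 + t * ‖x₀‖) ^ (ε / 2) * (1 + |s|) ^ (1 + ε / 2))⁻¹ := h4
    _ = (1 + t * ‖x₀‖) ^ (-(ε / 2)) * (1 + |s|) ^ (-(1 + ε / 2)) := by
        rw [mul_inv, ← Real.rpow_neg hapos.le, ← Real.rpow_neg hspos.le]
  set B : ℝ := C * ∫ s : ℝ, (1 + |s|) ^ (-(1 + ε / 2)) with hB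
  have hfdecay : ∀ t : ℝ, 1 ≤ t → |f t| ≤ (1 + t * ‖x₀‖) ^ (-(ε / 2)) * B := by
    intro t ht
    have hgint : Integrable
        (fun s : ℝ => (1 + t * ‖x₀‖) ^ (-(ε / 2)) * (C * (1 + |s|) ^ (-(1 + ε / 2)))) :=
      ((hintbase (1 + ε / 2) (by linarith)).const_mul C).const_mul _
    have hb : ∀ s : ℝ, ‖⟪W (t • x₀ + s • ω), ω⟫‖ ≤
        (1 + t * ‖x₀‖) ^ (-(ε / 2)) * (C * (1 + |s|) ^ (-(1 + ε / 2))) := by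
      intro s
      rw [Real.norm_eq_abs]
      calc |⟪W (t • x₀ + s • ω), ω⟫| ≤ ‖W (t • x₀ + s • ω)‖ * ‖ω‖ :=
            abs_real_inner_le_norm _ _
      _ = ‖W (t • x₀ + s • ω)‖ := by rw [hω, mul_one]
      _ ≤ C * (1 + ‖t • x₀ + s • ω‖) ^ (-(1 + ε)) := hWdecay _
      _ ≤ C * ((1 + t * ‖x₀‖) ^ (-(ε / 2)) * (1 + |s|) ^ (-(1 + ε / 2))) :=
            mul_le_mul_of_nonneg_left (hkey t s ht) hC.le
      _ = (1 + t * ‖x₀‖) ^ (-(ε / 2)) * (C * (1 + |s|) ^ (-(1 + ε / 2))) := by ring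
    have h5 : ‖f t‖ ≤ ∫ s : ℝ,
        (1 + t * ‖x₀‖) ^ (-(ε / 2)) * (C * (1 + |s|) ^ (-(1 + ε / 2))) :=
      norm_integral_le_of_norm_le hgint (Filter.Eventually.of_forall hb)
    rw [Real.norm_eq_abs] at h5
    calc |f t| ≤ ∫ s : ℝ, (1 + t * ‖x₀‖) ^ (-(ε / 2)) * (C * (1 + |s|) ^ (-(1 + ε / 2))) := h5
    _ = (1 + t * ‖x₀‖) ^ (-(ε / 2)) * B := by
        rw [integral_const_mul, integral_const_mul, hB]
  -- f tends to 0 at infinity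
  have htend : Filter.Tendsto f Filter.atTop (nhds 0) := by
    have h1 : Filter.Tendsto (fun t : ℝ => 1 + t * ‖x₀‖) Filter.atTop Filter.atTop :=
      Filter.tendsto_atTop_add_const_left _ 1
        (Filter.Tendsto.atTop_mul_const hx₀pos Filter.tendsto_id)
    have h2 : Filter.Tendsto (fun t : ℝ => (1 + t * ‖x₀‖) ^ (-(ε / 2)) * B)
        Filter.atTop (nhds 0) := by
      have := ((tendsto_rpow_neg_atTop (by linarith : (0:ℝ) < ε / 2)).comp h1).mul_const B
      simpa using this
    refine squeeze_zero_norm' ?_ h2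
    filter_upwards [Filter.eventually_ge_atTop (1:ℝ)] with t ht
    rw [Real.norm_eq_abs]
    exact hfdecay t ht
  -- conclude: f 1 = 0
  have hgoal : f 1 = 0 := by
    by_contra hne
    obtain ⟨k1, hk1⟩ := hmem 1 le_rfl
    have hk1ne : k1 ≠ 0 := by
      rintro rfl; apply hne; rw [hk1]; simp
    have hk1abs : (1:ℝ) ≤ |(k1:ℝ)| := by
      have := Int.one_le_abs hk1ne
      calc (1:ℝ) = ((1:ℤ):ℝ) := by norm_num
      _ ≤ ((|k1|:ℤ):ℝ) := by exact_mod_cast this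
      _ = |(k1:ℝ)| := by push_cast; ring
    have h2pi : 2 * π ≤ |f 1| := by
      rw [hk1, abs_mul, abs_of_pos (by positivity : (0:ℝ) < 2 * π)]
      nlinarith [pi_pos]
    -- find T ≥ 1 with |f T| < π
    have hev : ∀ᶠ t in Filter.atTop, |f t| < π := by
      have := Metric.tendsto_nhds.mp htend π pi_pos
      filter_upwards [this] with t ht
      simpa [Real.dist_eq] using ht
    obtain ⟨T, hTlt, hT1⟩ := (hev.and (Filter.eventually_ge_atTop (1:ℝ))).exists
    -- values at T must be 0
    have hfT : f T = 0 := by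
      obtain ⟨m, hm⟩ := hmem T hT1
      rcases eq_or_ne m 0 with rfl | hmne
      · rw [hm]; simp
      · exfalso
        have hmabs : (1:ℝ) ≤ |(m:ℝ)| := by
          have := Int.one_le_abs hmne
          calc (1:ℝ) = ((1:ℤ):ℝ) := by norm_num
          _ ≤ ((|m|:ℤ):ℝ) := by exact_mod_cast this
          _ = |(m:ℝ)| := by push_cast; ring
        have : 2 * π ≤ |f T| := by
          rw [hm, abs_mul, abs_of_pos (by positivity : (0:ℝ) < 2 * π)]
          nlinarith [pi_pos]
        nlinarith [pi_pos]
    -- IVT on |f| between 1 and T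
    have hcontabs : ContinuousOn (fun t => |f t|) (Set.Icc 1 T) :=
      (hfcont.abs.continuousOn)
    have hsub := intermediate_value_Icc' hT1 hcontabs
    have hπmem : π ∈ Set.Icc (|f T|) (|f 1|) := by
      constructor
      · rw [hfT]; simp [pi_pos.le]
      · linarith [pi_pos]
    obtain ⟨u, hu, hufu⟩ := hsub hπmem
    obtain ⟨j, hj⟩ := hmem u hu.1
    have hufu' : |f u| = π := hufu
    rcases eq_or_ne j 0 with rfl | hjne
    · rw [hj] at hufu'; simp at hufu'; linarith [pi_pos]
    · have hjabs : (1:ℝ) ≤ |(j:ℝ)| := by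
        have := Int.one_le_abs hjne
        calc (1:ℝ) = ((1:ℤ):ℝ) := by norm_num
        _ ≤ ((|j|:ℤ):ℝ) := by exact_mod_cast this
        _ = |(j:ℝ)| := by push_cast; ring
      have : 2 * π ≤ |f u| := by
        rw [hj, abs_mul, abs_of_pos (by positivity : (0:ℝ) < 2 * π)]
        nlinarith [pi_pos]
      rw [hufu'] at this
      linarith [pi_pos]
  -- rewrite f 1 back
  have : f 1 = ∫ s : ℝ, ⟪W (x₀ + s • ω), ω⟫ := by
    rw [hf]; simp only [one_smul]
  rw [← this]; exact hgoal
end
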